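/- Let $G$ be a transitively closed directed acyclic graph and let $H \subseteq G$ be a path consistent and admissible subgraph. Then $H$ is a disjoint union of alternating-induced subgraphs of induced subgraphs of $G$: there is a partition $\mathcal P$ of $[n]$ and, for each part $P_i$, disjoint subsets $L_i, R_i \subseteq P_i$, such that $E(H) = \{(a,b) \in E(G) : a \in L_i, b \in R_i \text{ for some } i\}$. -/

import Mathlib

/-!
If `a → b → c` is a path in `H`, the edge `(a, c)` of `G` cannot lie in `H` (path consistency),
and then the one-edge cycle `(a, c)` violates admissibility since `w c = w a + 2`. So `H` has no
directed path of length two: no vertex is both a source and a target of `H`, and `w` minus the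
indicator of the targets is constant on each component of `H`. Consequently an edge `(a, b)` of
`G` from a source to a target in the same component has `w b = w a + 1`, and admissibility of
the one-edge cycle `(a, b)` forces it into `H`.
-/

def UAdj {n : ℕ} (E : Set (Fin n × Fin n)) (u v : Fin n) : Prop :=
  (u, v) ∈ E ∨ (v, u) ∈ E

/-- `u` and `v` lie in the same connected component of the underlying undirected graph. -/
def SameComp {n : ℕ} (E : Set (Fin n × Fin n)) : Fin n → Fin n → Prop :=
  Relation.ReflTransGen (UAdj E)

/-- `WalkVal E i j k` : there is an undirected walk in `E` from `i` to `j` whose number of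
forward edges minus number of backward edges equals `k`. -/
inductive WalkVal {n : ℕ} (E : Set (Fin n × Fin n)) : Fin n → Fin n → ℤ → Prop
  | nil (v : Fin n) : WalkVal E v v 0
  | fwd {u v w : Fin n} {k : ℤ} : WalkVal E u v k → (v, w) ∈ E → WalkVal E u w (k + 1)
  | bwd {u v w : Fin n} {k : ℤ} : WalkVal E u v k → (w, v) ∈ E → WalkVal E u w (k - 1)

def PathConsistent {n : ℕ} (EH : Set (Fin n × Fin n)) : Prop :=
  ∀ (i j : Fin n) (k₁ k₂ : ℤ), WalkVal EH i j k₁ → WalkVal EH i j k₂ → k₁ = k₂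

def Admissible {n : ℕ} (E EH : Set (Fin n × Fin n)) (w : Fin n → ℤ) : Prop :=
  ∀ (k : ℕ) (c : Fin (k + 1) → Fin n × Fin n),
    (∀ i, c i ∈ E ∧ c i ∉ EH) →
    (∀ i : Fin (k + 1), SameComp EH (c i).2 (c (i + 1)).1) →
    -((k : ℤ) + 1) < ∑ i, (w (c i).1 - w (c i).2)

instance {n : ℕ} {E : Set (Fin n × Fin n)} : Std.Symm (UAdj E) := ⟨fun _ _ => Or.symm⟩

namespace SameComp

variable {n : ℕ} {E : Set (Fin n × Fin n)} {u v : Fin n}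

theorem symm (h : SameComp E u v) : SameComp E v u :=
  Std.Symm.symm (r := Relation.ReflTransGen (UAdj E)) _ _ h

theorem equivalence : Equivalence (SameComp E) :=
  ⟨fun _ => .refl, symm, .trans⟩

end SameComp

section Subgraph

variable {n : ℕ} {E EH : Set (Fin n × Fin n)} {w : Fin n → ℤ}

def sources (EH : Set (Fin n × Fin n)) : Set (Fin n) := {v | ∃ x, (v, x) ∈ EH}

def targets (EH : Set (Fin n × Fin n)) : Set (Fin n) := {v | ∃ x, (x, v) ∈ EH}

noncomputable def level (EH : Set (Fin n × Fin n)) (w : Fin n → ℤ) (v : Fin n) : ℤ :=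
  w v - (targets EH).indicator 1 v

theorem PathConsistent.not_mem_of_mem_of_mem (hpc : PathConsistent EH) {a b c : Fin n}
    (hab : (a, b) ∈ EH) (hbc : (b, c) ∈ EH) : (a, c) ∉ EH := fun hac => by
  have := hpc a c _ _ ((WalkVal.nil a).fwd hac) (((WalkVal.nil a).fwd hab).fwd hbc)
  omega

theorem Admissible.le_of_sameComp (hadm : Admissible E EH w) {a b : Fin n}
    (hab : (a, b) ∈ E) (hnot : (a, b) ∉ EH) (hba : SameComp EH b a) : w b ≤ w a := by
  have := hadm 0 (fun _ => (a, b)) (fun _ => ⟨hab, hnot⟩) (fun _ => hba)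
  simp only [Fin.sum_const, zero_add, one_smul] at this
  omega

theorem Admissible.no_two_path (hadm : Admissible E EH w)
    (htc : ∀ i j k : Fin n, (i, j) ∈ E → (j, k) ∈ E → (i, k) ∈ E) (hH : EH ⊆ E)
    (hpc : PathConsistent EH) (hw : ∀ e ∈ EH, w e.2 = w e.1 + 1) {a b c : Fin n}
    (hab : (a, b) ∈ EH) (hbc : (b, c) ∈ EH) : False := by
  have hca : SameComp EH c a := .head (.inr hbc) (.single (.inr hab))
  have hwca : w c ≤ w a :=
    hadm.le_of_sameComp (htc a b c (hH hab) (hH hbc)) (hpc.not_mem_of_mem_of_mem hab hbc) hca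
  have hwab : w b = w a + 1 := hw _ hab
  have hwbc : w c = w b + 1 := hw _ hbc
  omega

theorem disjoint_sources_targets
    (hno : ∀ a b c : Fin n, (a, b) ∈ EH → (b, c) ∈ EH → False) :
    Disjoint (sources EH) (targets EH) :=
  Set.disjoint_left.2 fun _ ⟨_, hx⟩ ⟨_, hy⟩ => hno _ _ _ hy hx

theorem level_eq_of_mem (hno : ∀ a b c : Fin n, (a, b) ∈ EH → (b, c) ∈ EH → False)
    (hw : ∀ e ∈ EH, w e.2 = w e.1 + 1) {u v : Fin n} (huv : (u, v) ∈ EH) :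
    level EH w u = level EH w v := by
  have hu : u ∉ targets EH := (disjoint_sources_targets hno).notMem_of_mem_left ⟨v, huv⟩
  have hv : v ∈ targets EH := ⟨u, huv⟩
  have hwuv : w v = w u + 1 := hw _ huv
  simp only [level, Set.indicator_of_notMem hu, Set.indicator_of_mem hv, Pi.one_apply]
  omega

theorem level_eq_of_sameComp (hno : ∀ a b c : Fin n, (a, b) ∈ EH → (b, c) ∈ EH → False)
    (hw : ∀ e ∈ EH, w e.2 = w e.1 + 1) {u v : Fin n} (huv : SameComp EH u v) :
    level EH w u = level EH w v := by
  induction huv with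
  | refl => rfl
  | tail _ hstep ih =>
    exact ih.trans <| hstep.elim (level_eq_of_mem hno hw) fun h => (level_eq_of_mem hno hw h).symm

end Subgraph

theorem stmt16_general (n : ℕ) (E EH : Set (Fin n × Fin n))
    (htc : ∀ i j k : Fin n, (i, j) ∈ E → (j, k) ∈ E → (i, k) ∈ E)
    (hH : EH ⊆ E)
    (hpc : PathConsistent EH)
    (w : Fin n → ℤ) (hw : ∀ e ∈ EH, w e.2 = w e.1 + 1)
    (hadm : Admissible E EH w) :
    ∃ (r : Fin n → Fin n → Prop) (L R : Set (Fin n)),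
      Equivalence r ∧ Disjoint L R ∧
      EH = {e ∈ E | e.1 ∈ L ∧ e.2 ∈ R ∧ r e.1 e.2} := by
  have hno : ∀ a b c, (a, b) ∈ EH → (b, c) ∈ EH → False := fun _ _ _ =>
    hadm.no_two_path htc hH hpc hw
  refine ⟨SameComp EH, sources EH, targets EH, SameComp.equivalence,
    disjoint_sources_targets hno, ?_⟩
  ext ⟨a, b⟩
  refine ⟨fun h => ⟨hH h, ⟨b, h⟩, ⟨a, h⟩, .single (.inl h)⟩, ?_⟩
  rintro ⟨hab, ha, hb, hcomp⟩
  by_contra hnot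
  have hlevel := level_eq_of_sameComp hno hw hcomp
  have hwab := hadm.le_of_sameComp hab hnot hcomp.symm
  have ha' : a ∉ targets EH := (disjoint_sources_targets hno).notMem_of_mem_left ha
  simp only [level, Set.indicator_of_notMem ha', Set.indicator_of_mem hb, Pi.one_apply] at hlevel
  omega

/-- A path consistent admissible subgraph of a transitively closed graph is a disjoint union
of alternating-induced subgraphs of induced subgraphs: there is a partition (equivalence
relation `r`) of the vertices and disjoint sets `L`, `R` such that `E(H)` consists of the
edges of `G` going from `L` to `R` within a part. -/
theorem stmt16 (n : ℕ) (E EH : Set (Fin n × Fin n))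
    (hE : ∀ e ∈ E, e.1 < e.2)
    (htc : ∀ i j k : Fin n, (i, j) ∈ E → (j, k) ∈ E → (i, k) ∈ E)
    (hH : EH ⊆ E)
    (hpc : PathConsistent EH)
    (w : Fin n → ℤ) (hw : ∀ e ∈ EH, w e.2 = w e.1 + 1)
    (hadm : Admissible E EH w) :
    ∃ (r : Fin n → Fin n → Prop) (L R : Set (Fin n)),
      Equivalence r ∧ Disjoint L R ∧
      EH = {e ∈ E | e.1 ∈ L ∧ e.2 ∈ R ∧ r e.1 e.2} :=
  stmt16_general n E EH htc hH hpc w hw hadm
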